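/- For any function f : X → ℝ̄ (extended-real valued), the polar transform f°(y) = inf{λ > 0 : ⟨x,y⟩ ≤ λ f(x) ∀x} equals the Minkowski functional of the 0-sublevel set of the Fenchel conjugate: f° = μ_{ {y : f*(y) ≤ 0} }, where f*(y) = sup_x (⟨x,y⟩ − f(x)). -/
import Mathlib


open scoped Pointwise ENNReal

/-- The Minkowski functional of a set `A`, with values in `[0,∞]` and `inf ∅ = +∞`. -/
noncomputable def mink {X : Type*} [AddCommGroup X] [Module ℝ X] (A : Set X) (x : X) : ℝ≥0∞ :=
  sInf (ENNReal.ofReal '' {r : ℝ | 0 < r ∧ x ∈ r • A})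

/-- The polar transform of an extended-real-valued function:
`f°(y) = inf{λ > 0 : ⟨x,y⟩ ≤ λ f(x) for all x}`, with `inf ∅ = +∞`. -/
noncomputable def polarTr {X Y : Type*} [AddCommGroup X] [Module ℝ X]
    [AddCommGroup Y] [Module ℝ Y] (p : X →ₗ[ℝ] Y →ₗ[ℝ] ℝ) (f : X → EReal) (y : Y) : ℝ≥0∞ :=
  sInf {l : ℝ≥0∞ | ∃ r : ℝ, 0 < r ∧ l = ENNReal.ofReal r ∧
    ∀ x : X, (p x y : EReal) ≤ (r : EReal) * f x}

/-- The Fenchel conjugate `f*(y) = sup_x (⟨x,y⟩ − f(x))`. -/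
noncomputable def fenchel {X Y : Type*} [AddCommGroup X] [Module ℝ X]
    [AddCommGroup Y] [Module ℝ Y] (p : X →ₗ[ℝ] Y →ₗ[ℝ] ℝ) (f : X → EReal) (y : Y) : EReal :=
  ⨆ x : X, (p x y : EReal) - f x


lemma ereal_sub_nonpos (a : ℝ) (b : EReal) : (a : EReal) - b ≤ 0 ↔ (a : EReal) ≤ b := by
  induction b using EReal.rec with
  | bot => simp [sub_eq_add_neg]
  | coe t => rw [← EReal.coe_sub, EReal.coe_nonpos, sub_nonpos, EReal.coe_le_coe_iff]
  | top => simp [sub_eq_add_neg]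

lemma key_scale {a : ℝ} {r : ℝ} (hr : 0 < r) (b : EReal) :
    ((r⁻¹ * a : ℝ) : EReal) ≤ b ↔ (a : EReal) ≤ (r : EReal) * b := by
  induction b using EReal.rec with
  | bot =>
    rw [EReal.coe_mul_bot_of_pos hr]
    simp only [le_bot_iff]
    exact ⟨fun h => absurd h (EReal.coe_ne_bot _), fun h => absurd h (EReal.coe_ne_bot _)⟩
  | coe t =>
    rw [← EReal.coe_mul, EReal.coe_le_coe_iff, EReal.coe_le_coe_iff]
    exact inv_mul_le_iff₀ hr
  | top => simp [EReal.coe_mul_top_of_pos hr]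

/-- The polar transform of any function equals the Minkowski functional of the `0`-sublevel
set of its Fenchel conjugate. -/
theorem polarTr_eq_mink_sublevel_fenchel {X Y : Type*} [AddCommGroup X] [Module ℝ X]
    [AddCommGroup Y] [Module ℝ Y] (p : X →ₗ[ℝ] Y →ₗ[ℝ] ℝ) (f : X → EReal) :
    polarTr p f = mink {y : Y | fenchel p f y ≤ 0} := by
  funext y
  unfold polarTr mink
  congr 1
  ext l
  simp only [Set.mem_image, Set.mem_setOf_eq]
  have key : ∀ r : ℝ, 0 < r →
      ((∀ x : X, (p x y : EReal) ≤ (r : EReal) * f x) ↔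
        y ∈ r • {y : Y | fenchel p f y ≤ 0}) := by
    intro r hr
    rw [Set.mem_smul_set_iff_inv_smul_mem₀ hr.ne']
    simp only [Set.mem_setOf_eq, fenchel, iSup_le_iff]
    apply forall_congr'
    intro x
    rw [map_smul, smul_eq_mul, ereal_sub_nonpos, key_scale hr]
  constructor
  · rintro ⟨r, hr, rfl, h⟩
    exact ⟨r, ⟨hr, (key r hr).1 h⟩, rfl⟩
  · rintro ⟨r, ⟨hr, hm⟩, rfl⟩
    exact ⟨r, hr, rfl, (key r hr).2 hm⟩
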